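/- Let φ be a CNF in the QEALM fragment. Then φ is satisfiable if and only if there is a choice of one component K_C of each clause C of φ such that the conjunction of the chosen components K_C over all C ∈ φ is satisfiable. -/

import Mathlib

/-- Terms over variables `V` and constant symbols `K`
(Bernays–Schönfinkel: the only function symbols are constants). -/
inductive Trm (V K : Type) : Type where
  | var : V → Trm V K
  | const : K → Trm V K
deriving DecidableEq

/-- A first-order literal (no equality): a polarity, a predicate symbol
and a list of argument terms. -/
structure Lit (V K P : Type) : Type where
  pol : Bool
  pred : P
  args : List (Trm V K)
deriving DecidableEq

/-- A clause is a (finite) set of literals, read disjunctively. -/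
abbrev Clause (V K P : Type) := Finset (Lit V K P)

/-- A CNF is a list of clauses, read conjunctively,
with all variables universally quantified. -/
abbrev CNF (V K P : Type) := List (Clause V K P)

variable {V K P : Type}

/-- The argument of a literal at the (1-based) position `i`. -/
def Lit.argAt (l : Lit V K P) : ℕ → Option (Trm V K)
  | 0 => none
  | i + 1 => l.args[i]?

/-- Variable `u` occurs at argument position `i` of the literal `l`. -/
def Lit.varAt (l : Lit V K P) (u : V) (i : ℕ) : Prop := l.argAt i = some (Trm.var u)

/-- Variable `u` occurs in the literal `l`. -/
def Lit.hasVar (l : Lit V K P) (u : V) : Prop := ∃ i, l.varAt u i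

/-- `i` is the least argument position at which `u` occurs in `l`. -/
def Lit.firstOccAt (l : Lit V K P) (u : V) (i : ℕ) : Prop :=
  l.varAt u i ∧ ∀ j, l.varAt u j → i ≤ j

/-- The QEALM clause condition: whenever a variable `u` occurs in several
literals of the clause, the least position at which it occurs is the same in
all these literals, and these literals agree on all argument positions up to
(and including) that one (a shared initial segment). -/
def QEALMClause (C : Clause V K P) : Prop :=
  ∀ (u : V), ∀ l₁ ∈ C, ∀ l₂ ∈ C, l₁.hasVar u → l₂.hasVar u →
    ∃ i, l₁.firstOccAt u i ∧ l₂.firstOccAt u i ∧ ∀ j ≤ i, l₁.argAt j = l₂.argAt j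

/-- A CNF is in the QEALM fragment iff every clause satisfies the QEALM clause condition. -/
def QEALM (φ : CNF V K P) : Prop := ∀ C ∈ φ, QEALMClause C

/-- A first-order structure for the signature `(K, P)` (no equality). -/
structure Model (K P : Type) : Type 1 where
  Dom : Type
  dne : Nonempty Dom
  constVal : K → Dom
  predVal : P → List Dom → Prop

/-- Value of a term in a model under a variable assignment. -/
def Trm.val (M : Model K P) (ρ : V → M.Dom) : Trm V K → M.Dom
  | .var u => ρ u
  | .const c => M.constVal c

/-- Truth of a literal in a model under a variable assignment. -/
def Lit.holds (M : Model K P) (ρ : V → M.Dom) (l : Lit V K P) : Prop :=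
  if l.pol then M.predVal l.pred (l.args.map (Trm.val M ρ))
  else ¬ M.predVal l.pred (l.args.map (Trm.val M ρ))

/-- Truth of a clause (a disjunction of literals). -/
def Clause.holds (M : Model K P) (ρ : V → M.Dom) (C : Clause V K P) : Prop :=
  ∃ l ∈ C, l.holds M ρ

/-- First-order satisfiability (without equality) of a universally quantified CNF. -/
def CNF.Satisfiable (φ : CNF V K P) : Prop :=
  ∃ M : Model K P, ∀ ρ : V → M.Dom, ∀ C ∈ φ, C.holds M ρ

/-- Applying a substitution to a term. -/
def Trm.subst (σ : V → Trm V K) : Trm V K → Trm V K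
  | .var u => σ u
  | .const c => .const c

/-- Applying a substitution to a literal. -/
def Lit.subst (σ : V → Trm V K) (l : Lit V K P) : Lit V K P :=
  ⟨l.pol, l.pred, l.args.map (Trm.subst σ)⟩

/-- Applying a substitution to a clause. -/
def Clause.subst [DecidableEq V] [DecidableEq K] [DecidableEq P]
    (σ : V → Trm V K) (C : Clause V K P) : Clause V K P :=
  C.image (Lit.subst σ)

/-- Applying a substitution to a CNF. -/
def CNF.subst [DecidableEq V] [DecidableEq K] [DecidableEq P]
    (σ : V → Trm V K) (φ : CNF V K P) : CNF V K P :=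
  φ.map (Clause.subst σ)

/-- An outer variable of a clause: a variable appearing in every literal of the clause. -/
def OuterVar (C : Clause V K P) (u : V) : Prop := ∀ l ∈ C, l.hasVar u

/-- `i` is the least position of an occurrence of `u` in any literal of `C`. -/
def LeastOccIn (C : Clause V K P) (u : V) (i : ℕ) : Prop :=
  (∃ l ∈ C, l.varAt u i) ∧ ∀ j, (∃ l ∈ C, l.varAt u j) → i ≤ j

/-- `i` is an outer position of the clause `C`. -/
def OuterPosClause (C : Clause V K P) (i : ℕ) : Prop :=
  ∃ u : V, OuterVar C u ∧ LeastOccIn C u i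

/-- `i` is a neutral position of the clause `C`: some term `t`, a constant or an
outer variable of `C`, occupies the `i`-th argument of every literal of `C`. -/
def NeutralPos (C : Clause V K P) (i : ℕ) : Prop :=
  ∃ t : Trm V K,
    ((∃ c, t = Trm.const c) ∨ (∃ u, t = Trm.var u ∧ OuterVar C u)) ∧
    ∀ l ∈ C, l.argAt i = some t

/-- `i` is an outer position of the CNF `φ`: an outer position of some clause and a
neutral position of every clause. -/
def OuterPosCNF (φ : CNF V K P) (i : ℕ) : Prop :=
  (∃ C ∈ φ, OuterPosClause C i) ∧ ∀ D ∈ φ, NeutralPos D i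

/-- Variable `u` occurs at argument position `i` in some literal of `φ`. -/
def VarOccursAt (φ : CNF V K P) (u : V) (i : ℕ) : Prop :=
  ∃ C ∈ φ, ∃ l ∈ C, l.varAt u i

/-- `σ` is the substitution that replaces every variable occurring at an argument
position `i` that is an outer position of `φ` by the constant `c i`, and leaves
all other variables unchanged. -/
def IsOuterSubst (φ : CNF V K P) (c : ℕ → K) (σ : V → Trm V K) : Prop :=
  (∀ u i, OuterPosCNF φ i → VarOccursAt φ u i → σ u = Trm.const (c i)) ∧
  (∀ u, (¬ ∃ i, OuterPosCNF φ i ∧ VarOccursAt φ u i) → σ u = Trm.var u)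

/-- A clause is inseparable if it is a single literal or some variable occurs in
every literal of the clause. -/
def InsepClause (C : Clause V K P) : Prop :=
  (∃ l, C = {l}) ∨ ∃ u : V, ∀ l ∈ C, l.hasVar u

/-- `Kc` is a component of a clause `C`: a non-empty inseparable subclause of `C`
closed under sharing variables with literals of `C`. -/
def IsComponent (Kc C : Clause V K P) : Prop :=
  Kc.Nonempty ∧ Kc ⊆ C ∧ InsepClause Kc ∧
    ∀ a ∈ Kc, ∀ b ∈ C, (∃ u : V, a.hasVar u ∧ b.hasVar u) → b ∈ Kc

/-- All variables shared between `l₁` and `l₂` occur as arguments in positions `≤ m`. -/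
def SharesUpTo (l₁ l₂ : Lit V K P) (m : ℕ) : Prop :=
  ∀ u : V, l₁.hasVar u → l₂.hasVar u →
    (∃ j ≤ m, l₁.varAt u j) ∧ (∃ j ≤ m, l₂.varAt u j)

/-- `i` is a fork index of `φ`: for some clause `C` of `φ` and literals `l₁, l₂` of
`C` (not necessarily distinct), `i` is the minimal value such that every variable
shared between `l₁` and `l₂` occurs at some argument position `≤ i`.  In particular,
`0` is a fork index if some such pair shares no variables. -/
def ForkIndex (φ : CNF V K P) (i : ℕ) : Prop :=
  ∃ C ∈ φ, ∃ l₁ ∈ C, ∃ l₂ ∈ C, IsLeast {m | SharesUpTo l₁ l₂ m} i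

/-! Under the QEALM condition, "equal or sharing a variable" is an equivalence relation on
the literals of a clause: if `a` and `b` share `u` and `b` and `c` share `v`, the occurrence of
whichever of `u`, `v` comes first in `b` lies in the initial segment that `b` shares with both `a`
and `c`. Its classes are the components, and they have pairwise disjoint variables. Hence if every
component of a clause could be falsified, the falsifying assignments could be glued into one
falsifying the whole clause; so a model of the clause is a model of one of its components. -/

lemma Lit.holds_congr (M : Model K P) {ρ₁ ρ₂ : V → M.Dom} (l : Lit V K P)
    (h : ∀ u, l.hasVar u → ρ₁ u = ρ₂ u) : l.holds M ρ₁ ↔ l.holds M ρ₂ := by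
  have hargs : l.args.map (Trm.val M ρ₁) = l.args.map (Trm.val M ρ₂) := by
    refine List.map_congr_left fun t ht => ?_
    cases t with
    | const c => rfl
    | var u =>
      obtain ⟨i, hi⟩ := List.mem_iff_getElem?.mp ht
      exact h u ⟨i + 1, hi⟩
  rw [Lit.holds, Lit.holds, hargs]

lemma Clause.holds_mono (M : Model K P) {ρ : V → M.Dom} {Kc C : Clause V K P} (hsub : Kc ⊆ C)
    (h : Kc.holds M ρ) : C.holds M ρ :=
  let ⟨l, hl, hlρ⟩ := h
  ⟨l, hsub hl, hlρ⟩

lemma CNF.forall_holds_of_forall₂_subset (M : Model K P) (ρ : V → M.Dom) {φ ψ : CNF V K P}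
    (h : List.Forall₂ (fun C Kc => Kc ⊆ C) φ ψ) (hψ : ∀ Kc ∈ ψ, Kc.holds M ρ) :
    ∀ C ∈ φ, C.holds M ρ := by
  induction h with
  | nil => simp
  | cons hsub _ ih =>
    simp only [List.forall_mem_cons] at hψ ⊢
    exact ⟨Clause.holds_mono M hsub hψ.1, ih hψ.2⟩

lemma CNF.Satisfiable.of_forall₂_subset {φ ψ : CNF V K P}
    (h : List.Forall₂ (fun C Kc => Kc ⊆ C) φ ψ) (hψ : ψ.Satisfiable) : φ.Satisfiable :=
  let ⟨M, hM⟩ := hψ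
  ⟨M, fun ρ => CNF.forall_holds_of_forall₂_subset M ρ h (hM ρ)⟩

lemma Clause.exists_forall_holds_block (M : Model K P) {C : Clause V K P}
    (B : Lit V K P → Clause V K P) (hself : ∀ a ∈ C, a ∈ B a)
    (hshare : ∀ a ∈ C, ∀ b ∈ C, (∃ u, a.hasVar u ∧ b.hasVar u) → B a = B b)
    (hC : ∀ ρ, C.holds M ρ) : ∃ a ∈ C, ∀ ρ, (B a).holds M ρ := by
  classical
  by_contra! h
  have hfalsify : ∀ S, (∃ a ∈ C, B a = S) → ∃ ρ : V → M.Dom, ¬ S.holds M ρ := by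
    rintro _ ⟨a, ha, rfl⟩
    exact h a ha
  have := M.dne
  choose! F hF using hfalsify
  let glued : V → M.Dom := fun u =>
    if hu : ∃ l ∈ C, l.hasVar u then F (B hu.choose) u else Classical.choice M.dne
  obtain ⟨b, hb, hbρ⟩ := hC glued
  refine hF (B b) ⟨b, hb, rfl⟩
    ⟨b, hself b hb, (Lit.holds_congr M b fun u hbu => ?_).mp hbρ⟩
  have hu : ∃ l ∈ C, l.hasVar u := ⟨b, hb, hbu⟩
  simp only [glued, dif_pos hu]
  rw [hshare _ hu.choose_spec.1 b hb ⟨u, hu.choose_spec.2, hbu⟩]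

lemma Lit.exists_firstOccAt {l : Lit V K P} {u : V} (h : l.hasVar u) :
    ∃ i, l.firstOccAt u i := by
  classical
  exact ⟨Nat.find h, Nat.find_spec h, fun _ hj => Nat.find_min' h hj⟩

def Lit.Linked (a b : Lit V K P) : Prop := a = b ∨ ∃ u, a.hasVar u ∧ b.hasVar u

lemma Lit.Linked.refl (a : Lit V K P) : a.Linked a := Or.inl rfl

lemma Lit.Linked.symm {a b : Lit V K P} : a.Linked b → b.Linked a
  | .inl h => .inl h.symm
  | .inr ⟨u, ha, hb⟩ => .inr ⟨u, hb, ha⟩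

open Classical in
noncomputable def Clause.componentOf (C : Clause V K P) (a : Lit V K P) : Clause V K P :=
  C.filter a.Linked

lemma Clause.mem_componentOf {C : Clause V K P} {a b : Lit V K P} :
    b ∈ C.componentOf a ↔ b ∈ C ∧ a.Linked b := by
  classical
  simp [Clause.componentOf]

lemma Clause.self_mem_componentOf {C : Clause V K P} {a : Lit V K P} (ha : a ∈ C) :
    a ∈ C.componentOf a :=
  Clause.mem_componentOf.mpr ⟨ha, Lit.Linked.refl a⟩

namespace QEALMClause

lemma varAt_of_firstOccAt {C : Clause V K P} (hq : QEALMClause C) {a c : Lit V K P}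
    (ha : a ∈ C) (hc : c ∈ C) {u v : V} {i j : ℕ}
    (hav : a.firstOccAt v j) (hcv : c.hasVar v) (hau : a.varAt u i) (hij : i ≤ j) :
    c.varAt u i := by
  obtain ⟨j', haj', -, hprefix⟩ := hq v a ha c hc ⟨j, hav.1⟩ hcv
  have hj : j' = j := le_antisymm (haj'.2 j hav.1) (hav.2 j' haj'.1)
  subst hj
  rw [Lit.varAt, ← hprefix i hij]
  exact hau

lemma linked_trans {C : Clause V K P} (hq : QEALMClause C) {a b c : Lit V K P}
    (ha : a ∈ C) (hb : b ∈ C) (hc : c ∈ C)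
    (hab : a.Linked b) (hbc : b.Linked c) : a.Linked c := by
  rcases hab with rfl | ⟨u, hau, hbu⟩
  · exact hbc
  rcases hbc with rfl | ⟨v, hbv, hcv⟩
  · exact .inr ⟨u, hau, hbu⟩
  obtain ⟨i, hbi⟩ := Lit.exists_firstOccAt hbu
  obtain ⟨j, hbj⟩ := Lit.exists_firstOccAt hbv
  rcases le_total i j with hij | hji
  · exact .inr ⟨u, hau, i, hq.varAt_of_firstOccAt hb hc hbj hcv hbi.1 hij⟩
  · exact .inr ⟨v, ⟨j, hq.varAt_of_firstOccAt hb ha hbi hau hbj.1 hji⟩, hcv⟩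

lemma componentOf_eq {C : Clause V K P} (hq : QEALMClause C) {a b : Lit V K P}
    (ha : a ∈ C) (hb : b ∈ C) (hab : a.Linked b) :
    C.componentOf a = C.componentOf b := by
  ext x
  simp only [Clause.mem_componentOf]
  exact ⟨fun ⟨hx, hax⟩ => ⟨hx, hq.linked_trans hb ha hx hab.symm hax⟩,
    fun ⟨hx, hbx⟩ => ⟨hx, hq.linked_trans ha hb hx hab hbx⟩⟩

/-- A variable at the least position carrying any variable of `a` is an outer variable of the
component of `a`. -/
lemma insepClause_componentOf {C : Clause V K P} (hq : QEALMClause C) {a : Lit V K P}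
    (ha : a ∈ C) : InsepClause (C.componentOf a) := by
  classical
  by_cases hvar : ∃ i u, a.varAt u i
  · obtain ⟨u₀, hu₀⟩ := Nat.find_spec hvar
    refine .inr ⟨u₀, fun c hc => ?_⟩
    obtain ⟨hcC, rfl | ⟨v, hav, hcv⟩⟩ := Clause.mem_componentOf.mp hc
    · exact ⟨_, hu₀⟩
    obtain ⟨j, haj⟩ := Lit.exists_firstOccAt hav
    exact ⟨_, hq.varAt_of_firstOccAt ha hcC haj hcv hu₀ (Nat.find_min' hvar ⟨v, haj.1⟩)⟩
  · refine .inl ⟨a, Finset.eq_singleton_iff_unique_mem.mpr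
      ⟨Clause.self_mem_componentOf ha, fun c hc => ?_⟩⟩
    obtain ⟨-, rfl | ⟨v, ⟨i, hav⟩, -⟩⟩ := Clause.mem_componentOf.mp hc
    · rfl
    · exact absurd ⟨i, v, hav⟩ hvar

lemma isComponent_componentOf {C : Clause V K P} (hq : QEALMClause C) {a : Lit V K P}
    (ha : a ∈ C) : IsComponent (C.componentOf a) C := by
  refine ⟨⟨a, Clause.self_mem_componentOf ha⟩, fun _ hb => (Clause.mem_componentOf.mp hb).1,
    hq.insepClause_componentOf ha, fun x hx b hb hxb => ?_⟩
  obtain ⟨hxC, hax⟩ := Clause.mem_componentOf.mp hx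
  exact Clause.mem_componentOf.mpr ⟨hb, hq.linked_trans ha hxC hb hax (.inr hxb)⟩

lemma exists_isComponent_forall_holds {C : Clause V K P} (hq : QEALMClause C) (M : Model K P)
    (hC : ∀ ρ, C.holds M ρ) :
    ∃ Kc, IsComponent Kc C ∧ ∀ ρ, Kc.holds M ρ := by
  obtain ⟨a, ha, hvalid⟩ := Clause.exists_forall_holds_block M C.componentOf
    (fun _ => Clause.self_mem_componentOf)
    (fun _ ha _ hb hab => hq.componentOf_eq ha hb (.inr hab)) hC
  exact ⟨_, hq.isComponent_componentOf ha, hvalid⟩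

end QEALMClause

/-- A CNF `φ` in the QEALM fragment is satisfiable iff there is a
choice of one component `K_C` of each clause `C` of `φ` such that the conjunction
of the chosen components is satisfiable. -/
theorem statement_6 (φ : CNF V K P) (hq : QEALM φ) :
    CNF.Satisfiable φ ↔
      ∃ ψ : CNF V K P, List.Forall₂ (fun C Kc => IsComponent Kc C) φ ψ ∧
        CNF.Satisfiable ψ := by
  constructor
  · rintro ⟨M, hM⟩
    have hcomp : ∀ C ∈ φ, ∃ Kc, IsComponent Kc C ∧ ∀ ρ, Kc.holds M ρ := fun C hC =>
      (hq C hC).exists_isComponent_forall_holds M fun ρ => hM ρ C hC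
    choose! g hg using hcomp
    refine ⟨φ.map g, ?_, M, fun ρ => ?_⟩
    · exact List.forall₂_map_right_iff.mpr (List.forall₂_same.mpr fun C hC => (hg C hC).1)
    · simpa using fun C hC => (hg C hC).2 ρ
  · rintro ⟨ψ, hψ, hsat⟩
    exact hsat.of_forall₂_subset (hψ.imp fun _ _ h => h.2.1)
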